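/- arXiv:2210.13786 — 4 statements merged into one kernel-verified Lean document; each statement's English description precedes it below -/
import Mathlib

section
/- For any Schwartz function h on ℝ³, the L² norm of h is bounded by a constant times the L² norm of ⟨x⟩·∇h, i.e. ‖h‖_{L²(ℝ³)} ≲ ‖⟨x⟩ ∇h‖_{L²(ℝ³)}. -/
/-!
Integrating by parts against the coordinate functionals gives, for every Schwartz function `q` on
an `n`-dimensional space, the virial identity `∫ Dq(x) x = -n ∫ q`. For `q = h²` this reads
`n ∫ h² = -2 ∫ h Dh(x) x`, and `2 |h Dh(x) x| ≤ h² + ‖x‖² ‖Dh(x)‖²` then yields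
`(n - 1) ∫ h² ≤ ∫ ‖x‖² ‖Dh(x)‖²`.
-/

open MeasureTheory SchwartzMap Module
open scoped LineDeriv

namespace SchwartzMap

variable {D : Type*} [NormedAddCommGroup D] [NormedSpace ℝ D] [FiniteDimensional ℝ D]
  [MeasurableSpace D] [BorelSpace D] {μ : Measure D} [μ.IsAddHaarMeasure]

theorem integrable_clm_apply_mul (ℓ : D →L[ℝ] ℝ) (q : 𝓢(D, ℝ)) :
    Integrable (fun x ↦ ℓ x * q x) μ := by
  refine ((q.integrable_pow_mul μ 1).const_mul ‖ℓ‖).mono' (by fun_prop) (ae_of_all _ fun x ↦ ?_)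
  rw [norm_mul, pow_one, ← mul_assoc]
  gcongr
  exact ℓ.le_opNorm x

theorem integral_clm_apply_mul_fderiv (ℓ : D →L[ℝ] ℝ) (q : 𝓢(D, ℝ)) (v : D) :
    ∫ x, ℓ x * fderiv ℝ q x v ∂μ = -(ℓ v * ∫ x, q x ∂μ) := by
  have := integral_mul_fderiv_eq_neg_fderiv_mul_of_integrable (μ := μ) (f := ⇑ℓ) (g := ⇑q) (v := v)
    (by simpa [ContinuousLinearMap.fderiv] using q.integrable.const_mul (ℓ v))
    (integrable_clm_apply_mul ℓ (∂_{v} q))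
    (integrable_clm_apply_mul ℓ q)
    (fun x _ ↦ ℓ.differentiableAt) (fun x _ ↦ q.differentiableAt)
  simpa [ContinuousLinearMap.fderiv, integral_const_mul] using this

theorem integral_fderiv_apply_self (q : 𝓢(D, ℝ)) :
    ∫ x, fderiv ℝ q x x ∂μ = -(finrank ℝ D * ∫ x, q x ∂μ) := by
  let b := finBasis ℝ D
  let coord (i : Fin (finrank ℝ D)) : D →L[ℝ] ℝ := LinearMap.toContinuousLinearMap (b.coord i)
  have hexpand (x : D) : fderiv ℝ q x x = ∑ i, coord i x * fderiv ℝ q x (b i) := by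
    nth_rw 2 [← b.sum_repr x]
    simp only [map_sum, map_smul, smul_eq_mul]
    rfl
  simp_rw [hexpand]
  rw [integral_finsetSum]
  · simp only [integral_clm_apply_mul_fderiv]
    simp [coord]
  · exact fun i _ ↦ integrable_clm_apply_mul (coord i) (∂_{b i} q)

theorem finrank_mul_integral_sq (h : 𝓢(D, ℝ)) :
    finrank ℝ D * ∫ x, h x ^ 2 ∂μ = -∫ x, 2 * h x * fderiv ℝ h x x ∂μ := by
  let q : 𝓢(D, ℝ) := pairing (ContinuousLinearMap.mul ℝ ℝ) h h
  have hq (x : D) : q x = h x ^ 2 := by simp [q, sq]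
  have hdq (x : D) : fderiv ℝ q x x = 2 * h x * fderiv ℝ h x x := by
    rw [show (q : D → ℝ) = fun y ↦ h y * h y from rfl,
      fderiv_fun_mul h.differentiableAt h.differentiableAt]
    simp only [add_apply, smul_apply, smul_eq_mul]
    ring
  have := integral_fderiv_apply_self (μ := μ) q
  simp only [hq, hdq] at this
  linarith

theorem integrable_norm_pow_mul_norm_sq {F : Type*} [NormedAddCommGroup F] [NormedSpace ℝ F]
    (f : 𝓢(D, F)) (k : ℕ) : Integrable (fun x ↦ ‖x‖ ^ k * ‖f x‖ ^ 2) μ := by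
  obtain ⟨C, -, hC⟩ := f.decay 0 0
  simp only [pow_zero, one_mul, norm_iteratedFDeriv_zero] at hC
  refine ((f.integrable_pow_mul μ k).mul_const C).mono' (by fun_prop) (ae_of_all _ fun x ↦ ?_)
  rw [Real.norm_of_nonneg (by positivity), sq, ← mul_assoc]
  gcongr
  exact hC x

theorem finrank_sub_one_mul_integral_sq_le (h : 𝓢(D, ℝ)) :
    ((finrank ℝ D : ℝ) - 1) * ∫ x, h x ^ 2 ∂μ ≤ ∫ x, ‖x‖ ^ 2 * ‖fderiv ℝ h x‖ ^ 2 ∂μ := by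
  have hpt (x : D) : |2 * h x * fderiv ℝ h x x| ≤ h x ^ 2 + ‖x‖ ^ 2 * ‖fderiv ℝ h x‖ ^ 2 := by
    have hle : |fderiv ℝ h x x| ≤ ‖x‖ * ‖fderiv ℝ h x‖ := by
      rw [mul_comm]; exact (fderiv ℝ h x).le_opNorm x
    rw [abs_mul, abs_mul, abs_two, ← sq_abs (h x)]
    nlinarith [two_mul_le_add_sq |h x| (‖x‖ * ‖fderiv ℝ h x‖),
      mul_le_mul_of_nonneg_left hle (abs_nonneg (h x))]
  have hsq : Integrable (fun x ↦ h x ^ 2) μ := by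
    simpa using integrable_norm_pow_mul_norm_sq (μ := μ) h 0
  have hweighted : Integrable (fun x ↦ ‖x‖ ^ 2 * ‖fderiv ℝ h x‖ ^ 2) μ := by
    simpa using integrable_norm_pow_mul_norm_sq (μ := μ) (fderivCLM ℝ D ℝ h) 2
  have hDh : Continuous (fderiv ℝ h) := (fderivCLM ℝ D ℝ h).continuous
  have hcross : Integrable (fun x ↦ 2 * h x * fderiv ℝ h x x) μ :=
    (hsq.add hweighted).mono' (by fun_prop) (ae_of_all _ fun x ↦ hpt x)
  have hbound : -∫ x, 2 * h x * fderiv ℝ h x x ∂μ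
      ≤ ∫ x, h x ^ 2 ∂μ + ∫ x, ‖x‖ ^ 2 * ‖fderiv ℝ h x‖ ^ 2 ∂μ := by
    rw [← integral_neg, ← integral_add hsq hweighted]
    exact integral_mono hcross.neg (hsq.add hweighted) fun x ↦ (neg_le_abs _).trans (hpt x)
  rw [sub_one_mul, finrank_mul_integral_sq]
  linarith

end SchwartzMap

/-- **Weighted Hardy inequality in 3D.** For any Schwartz function `h` on `ℝ³`,
`‖h‖_{L²} ≲ ‖⟨x⟩ ∇h‖_{L²}`, with an absolute constant. Stated for the squared norms. -/
theorem weighted_hardy_3d :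
    ∃ C > 0, ∀ h : SchwartzMap (EuclideanSpace ℝ (Fin 3)) ℝ,
      ∫ x, (h x)^2 ≤ C * ∫ x, (1 + ‖x‖^2) * ‖fderiv ℝ h x‖^2 := by
  refine ⟨1 / 2, by norm_num, fun h ↦ ?_⟩
  have hardy := finrank_sub_one_mul_integral_sq_le (μ := volume) h
  rw [finrank_euclideanSpace_fin] at hardy
  have hweight : ∫ x, ‖x‖ ^ 2 * ‖fderiv ℝ h x‖ ^ 2 ≤ ∫ x, (1 + ‖x‖ ^ 2) * ‖fderiv ℝ h x‖ ^ 2 := by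
    refine integral_mono_of_nonneg (ae_of_all _ fun x ↦ by positivity) ?_
      (ae_of_all _ fun x ↦ by dsimp only; gcongr; linarith)
    simpa [add_mul, Pi.add_def] using (integrable_norm_pow_mul_norm_sq (fderivCLM ℝ _ ℝ h) 0).add
      (integrable_norm_pow_mul_norm_sq (μ := volume) (fderivCLM ℝ _ ℝ h) 2)
  norm_num at hardy
  linarith
end

section
/- Let u : [0,∞) × ℝ³ → ℝ be twice continuously differentiable, let t > 0 and x ∈ ℝ³ with r = |x|. Then (t² − r²) Δu = r² □u + r ∂_r u − 3t ∂_t u − Σ_{i=1}^{3} x_i ∂_t Ω_{i0}u + t Σ_{i=1}^{3} ∂_i Ω_{i0}u, where Ω_{i0} = t∂_i + x_i ∂_t, □ = ∂_{tt} − Δ, and ∂_r = (x/|x|)·∇. -/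
open Real MeasureTheory

/-- Partial derivative in the `j`-th space-time coordinate (`0` = time, `1,2,3` = space). -/
noncomputable def pd (j : Fin 4) (U : (Fin 4 → ℝ) → ℝ) : (Fin 4 → ℝ) → ℝ :=
  fun z => fderiv ℝ U z (Pi.single j 1)

/-- Spatial Laplacian. -/
noncomputable def lap (U : (Fin 4 → ℝ) → ℝ) : (Fin 4 → ℝ) → ℝ :=
  fun z => ∑ i : Fin 3, pd i.succ (pd i.succ U) z

/-- The d'Alembertian `□ = ∂_tt − Δ`. -/
noncomputable def box (U : (Fin 4 → ℝ) → ℝ) : (Fin 4 → ℝ) → ℝ :=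
  fun z => pd 0 (pd 0 U) z - lap U z

/-- The spatial radius `r = |x|`. -/
noncomputable def rad (z : Fin 4 → ℝ) : ℝ := Real.sqrt (∑ i : Fin 3, (z i.succ)^2)

/-- Lorentz boost `Ω_{i0} = t∂_i + x_i ∂_t`. -/
noncomputable def boost (i : Fin 3) (U : (Fin 4 → ℝ) → ℝ) : (Fin 4 → ℝ) → ℝ :=
  fun z => z 0 * pd i.succ U z + z i.succ * pd 0 U z

/-- Rotation `Ω_{ij} = x_i∂_j − x_j∂_i`. -/
noncomputable def rot (i j : Fin 3) (U : (Fin 4 → ℝ) → ℝ) : (Fin 4 → ℝ) → ℝ :=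
  fun z => z i.succ * pd j.succ U z - z j.succ * pd i.succ U z

/-- Radial derivative `∂_r = (x/r)·∇`. -/
noncomputable def dr (U : (Fin 4 → ℝ) → ℝ) : (Fin 4 → ℝ) → ℝ :=
  fun z => ∑ i : Fin 3, (z i.succ / rad z) * pd i.succ U z

/-- Japanese bracket `⟨s⟩ = √(1+s²)`. -/
noncomputable def jb (s : ℝ) : ℝ := Real.sqrt (1 + s^2)

/-- The eleven operators `Γ^{≤1}`: identity, `∂_t`, `∂_i`, boosts, rotations. -/
noncomputable def gam : Fin 11 → ((Fin 4 → ℝ) → ℝ) → ((Fin 4 → ℝ) → ℝ) :=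
  ![id, pd 0, pd 1, pd 2, pd 3, boost 0, boost 1, boost 2, rot 0 1, rot 0 2, rot 1 2]

/-- `|∂Γ^{≤1}u|`: the ℓ² norm of all space-time first derivatives of all `Γ^{≤1}u`. -/
noncomputable def dGam (U : (Fin 4 → ℝ) → ℝ) (z : Fin 4 → ℝ) : ℝ :=
  Real.sqrt (∑ a : Fin 4, ∑ k : Fin 11, (pd a (gam k U) z)^2)

/-!
By the product rule, `∂_t Ω_{i0}u = t ∂_t∂_i u + ∂_i u + x_i ∂_t² u` and
`∂_i Ω_{i0}u = t ∂_i² u + x_i ∂_t∂_i u + ∂_t u`. In `t Σ_i ∂_i Ω_{i0}u − Σ_i x_i ∂_t Ω_{i0}u` the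
mixed terms `t x_i ∂_t∂_i u` cancel by the symmetry of second derivatives of a `C²` function,
leaving `t² Δu − r² ∂_t² u − r ∂_r u + 3t ∂_t u`, since `r² = Σ x_i²` and `r ∂_r u = Σ x_i ∂_i u`.
-/

lemma ContDiffAt.differentiableAt_fderiv {𝕜 E F : Type*} [NontriviallyNormedField 𝕜]
    [NormedAddCommGroup E] [NormedSpace 𝕜 E] [NormedAddCommGroup F] [NormedSpace 𝕜 F]
    {f : E → F} {x : E} (hf : ContDiffAt 𝕜 2 f x) : DifferentiableAt 𝕜 (fderiv 𝕜 f) x :=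
  (hf.fderiv_right (m := 1) le_rfl).differentiableAt one_ne_zero

section Partials

variable {U g : (Fin 4 → ℝ) → ℝ} {z : Fin 4 → ℝ}

lemma pd_coord_mul (hg : DifferentiableAt ℝ g z) (j k : Fin 4) :
    pd j (fun w => w k * g w) z = z k * pd j g z + (Pi.single j 1 : Fin 4 → ℝ) k * g z := by
  rw [pd, fderiv_fun_mul (differentiableAt_apply k z) hg, (hasFDerivAt_apply k z).fderiv]
  simp [pd, mul_comm (g z)]

lemma differentiableAt_pd (hU : ContDiffAt ℝ 2 U z) (j : Fin 4) :
    DifferentiableAt ℝ (pd j U) z :=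
  hU.differentiableAt_fderiv.clm_apply (differentiableAt_const _)

lemma pd_pd_eq_fderiv_fderiv (hU : ContDiffAt ℝ 2 U z) (a b : Fin 4) :
    pd a (pd b U) z = fderiv ℝ (fderiv ℝ U) z (Pi.single a 1) (Pi.single b 1) := by
  change fderiv ℝ (fun y => fderiv ℝ U y (Pi.single b 1)) z _ = _
  simp [fderiv_clm_apply hU.differentiableAt_fderiv (differentiableAt_const _)]

lemma pd_pd_comm (hU : ContDiffAt ℝ 2 U z) (a b : Fin 4) :
    pd a (pd b U) z = pd b (pd a U) z := by
  rw [pd_pd_eq_fderiv_fderiv hU, pd_pd_eq_fderiv_fderiv hU,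
    (hU.isSymmSndFDerivAt (by simp)).eq]

lemma pd_boost (hU : ContDiffAt ℝ 2 U z) (i : Fin 3) (a : Fin 4) :
    pd a (boost i U) z =
      z 0 * pd a (pd i.succ U) z + (Pi.single a 1 : Fin 4 → ℝ) 0 * pd i.succ U z
        + (z i.succ * pd a (pd 0 U) z + (Pi.single a 1 : Fin 4 → ℝ) i.succ * pd 0 U z) := by
  have hmul (k j : Fin 4) :
      DifferentiableAt ℝ (fun w => w k * pd j U w) z :=
    (differentiableAt_apply k z).mul (differentiableAt_pd hU j)
  change pd a (fun w => w 0 * pd i.succ U w + w i.succ * pd 0 U w) z = _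
  rw [pd, fderiv_fun_add (hmul _ _) (hmul _ _), add_apply, ← pd, ← pd,
    pd_coord_mul (differentiableAt_pd hU _), pd_coord_mul (differentiableAt_pd hU _)]

lemma pd_time_boost (hU : ContDiffAt ℝ 2 U z) (i : Fin 3) :
    pd 0 (boost i U) z =
      z 0 * pd 0 (pd i.succ U) z + pd i.succ U z + z i.succ * pd 0 (pd 0 U) z := by
  rw [pd_boost hU]
  simp [Fin.succ_ne_zero]

lemma pd_space_boost (hU : ContDiffAt ℝ 2 U z) (i : Fin 3) :
    pd i.succ (boost i U) z =
      z 0 * pd i.succ (pd i.succ U) z + z i.succ * pd 0 (pd i.succ U) z + pd 0 U z := by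
  rw [pd_boost hU, pd_pd_comm hU i.succ 0]
  simp only [ne_eq, Fin.succ_ne_zero, not_false_eq_true, Pi.single_eq_of_ne', Pi.single_eq_same,
    zero_mul, add_zero, one_mul]
  ring

end Partials

lemma rad_sq (z : Fin 4 → ℝ) : rad z ^ 2 = ∑ i : Fin 3, z i.succ ^ 2 :=
  Real.sq_sqrt (by positivity)

lemma rad_mul_dr {z : Fin 4 → ℝ} (hr : rad z ≠ 0) (U : (Fin 4 → ℝ) → ℝ) :
    rad z * dr U z = ∑ i : Fin 3, z i.succ * pd i.succ U z := by
  simp only [dr, Finset.mul_sum]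
  congr! 1 with i
  field_simp

/-- **Key algebraic identity** (eq. (2.30) of the paper): for `u` of class `C²` on
`(0,∞) × ℝ³`, `t > 0`, `x ≠ 0`:
`(t² − r²) Δu = r² □u + r ∂_r u − 3t ∂_t u − Σ_i x_i ∂_t Ω_{i0}u + t Σ_i ∂_i Ω_{i0}u`. -/
theorem lap_identity (U : (Fin 4 → ℝ) → ℝ)
    (hU : ContDiffOn ℝ 2 U {z : Fin 4 → ℝ | 0 < z 0})
    (z : Fin 4 → ℝ) (ht : 0 < z 0) (hr : rad z ≠ 0) :
    ((z 0)^2 - (rad z)^2) * lap U z =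
      (rad z)^2 * box U z + rad z * dr U z - 3 * z 0 * pd 0 U z
        - (∑ i : Fin 3, z i.succ * pd 0 (boost i U) z)
        + z 0 * ∑ i : Fin 3, pd i.succ (boost i U) z := by
  have hUz : ContDiffAt ℝ 2 U z :=
    hU.contDiffAt ((isOpen_lt continuous_const (continuous_apply 0)).mem_nhds ht)
  simp only [box, lap, rad_sq, rad_mul_dr hr, pd_time_boost hUz, pd_space_boost hUz,
    Fin.sum_univ_three]
  ring
end

section
/- Let h : ℝ → ℝ be a Schwartz function, t ≥ 1, and suppose t/2 ≤ r < t. Then (t−r) r² |h(r)|² ≲ ∫_r^t |h(ρ)|² ρ² dρ + ∫_r^t |t−ρ|² |h'(ρ)|² ρ² dρ. -/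
/-!
Since `(t - ρ) h(ρ)²` vanishes at `ρ = t`, the fundamental theorem of calculus gives
`(t - r) h(r)² = ∫_r^t (h² - 2 (t - ρ) h h') dρ`. The integrand is at most `2 (h² + (t - ρ)² h'²)`,
and on `[r, t]` the weight `r²` is at most `ρ²`, so the estimate holds with constant `2`.
-/

open MeasureTheory intervalIntegral

theorem sub_mul_sq_eq_integral {f : ℝ → ℝ} (hf : ContDiff ℝ 1 f) (r t : ℝ) :
    (t - r) * f r ^ 2 = ∫ ρ in r..t, (f ρ ^ 2 - 2 * (t - ρ) * f ρ * deriv f ρ) := by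
  have hderiv : ∀ x, HasDerivAt (fun ρ => (t - ρ) * f ρ ^ 2)
      (2 * (t - x) * f x * deriv f x - f x ^ 2) x := fun x => by
    refine (((hasDerivAt_id x).const_sub t).fun_mul
      ((hf.differentiable one_ne_zero x).hasDerivAt.fun_pow 2)).congr_deriv ?_
    simp only [id, Nat.cast_ofNat]
    ring
  have hcont : Continuous fun x => 2 * (t - x) * f x * deriv f x - f x ^ 2 := by
    have hf_cont := hf.continuous
    have hf'_cont := hf.continuous_deriv le_rfl
    fun_prop
  calc (t - r) * f r ^ 2 = -((t - t) * f t ^ 2 - (t - r) * f r ^ 2) := by ring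
    _ = -∫ ρ in r..t, (2 * (t - ρ) * f ρ * deriv f ρ - f ρ ^ 2) := by
      rw [integral_eq_sub_of_hasDerivAt (fun x _ => hderiv x) (hcont.intervalIntegrable r t)]
    _ = _ := by
      rw [← intervalIntegral.integral_neg]
      simp only [neg_sub]

theorem sq_mul_sq_sub_two_mul_le {r ρ s a b : ℝ} (hr : 0 ≤ r) (hrρ : r ≤ ρ) :
    r ^ 2 * (a ^ 2 - 2 * s * a * b) ≤ 2 * (a ^ 2 * ρ ^ 2) + 2 * (|s| ^ 2 * b ^ 2 * ρ ^ 2) := by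
  have hab : a ^ 2 - 2 * s * a * b ≤ 2 * (a ^ 2 + s ^ 2 * b ^ 2) := by
    nlinarith [sq_nonneg (a + s * b), sq_nonneg (s * b)]
  rw [sq_abs]
  calc r ^ 2 * (a ^ 2 - 2 * s * a * b) ≤ r ^ 2 * (2 * (a ^ 2 + s ^ 2 * b ^ 2)) := by gcongr
    _ ≤ ρ ^ 2 * (2 * (a ^ 2 + s ^ 2 * b ^ 2)) := by gcongr
    _ = _ := by ring

theorem sub_mul_sq_mul_sq_le_integral {f : ℝ → ℝ} (hf : ContDiff ℝ 1 f) {r t : ℝ}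
    (hr : 0 ≤ r) (hrt : r ≤ t) :
    (t - r) * r ^ 2 * f r ^ 2 ≤
      2 * ((∫ ρ in r..t, f ρ ^ 2 * ρ ^ 2) + ∫ ρ in r..t, |t - ρ| ^ 2 * deriv f ρ ^ 2 * ρ ^ 2) := by
  have hf_cont := hf.continuous
  have hf'_cont := hf.continuous_deriv le_rfl
  have hI₁ : IntervalIntegrable (fun ρ => 2 * (f ρ ^ 2 * ρ ^ 2)) volume r t :=
    Continuous.intervalIntegrable (by fun_prop) r t
  have hI₂ : IntervalIntegrable (fun ρ => 2 * (|t - ρ| ^ 2 * deriv f ρ ^ 2 * ρ ^ 2)) volume r t :=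
    Continuous.intervalIntegrable (by fun_prop) r t
  calc (t - r) * r ^ 2 * f r ^ 2
      = ∫ ρ in r..t, r ^ 2 * (f ρ ^ 2 - 2 * (t - ρ) * f ρ * deriv f ρ) := by
        rw [intervalIntegral.integral_const_mul, ← sub_mul_sq_eq_integral hf]
        ring
    _ ≤ ∫ ρ in r..t, (2 * (f ρ ^ 2 * ρ ^ 2) + 2 * (|t - ρ| ^ 2 * deriv f ρ ^ 2 * ρ ^ 2)) :=
        integral_mono_on hrt (Continuous.intervalIntegrable (by fun_prop) r t) (hI₁.add hI₂)
          fun ρ hρ => sq_mul_sq_sub_two_mul_le hr hρ.1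
    _ = _ := by
        rw [integral_add hI₁ hI₂, intervalIntegral.integral_const_mul,
          intervalIntegral.integral_const_mul, mul_add]

/-- **1D weighted Sobolev estimate (interior region).** For `h ∈ 𝒮(ℝ)`, `t ≥ 1`,
`t/2 ≤ r < t`:
`(t−r) r² h(r)² ≲ ∫_r^t h(ρ)² ρ² dρ + ∫_r^t (t−ρ)² h'(ρ)² ρ² dρ`, absolute constant. -/
theorem weighted_sobolev_interior :
    ∃ C > 0, ∀ (h : SchwartzMap ℝ ℝ) (t r : ℝ), 1 ≤ t → t / 2 ≤ r → r < t →
      (t - r) * r^2 * (h r)^2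
        ≤ C * ((∫ ρ in r..t, (h ρ)^2 * ρ^2)
            + ∫ ρ in r..t, |t - ρ|^2 * (deriv h ρ)^2 * ρ^2) :=
  ⟨2, two_pos, fun h t r ht hr hrt =>
    sub_mul_sq_mul_sq_le_integral ((h.smooth ⊤).of_le (by simp)) (by linarith) hrt.le⟩
end

section
/- Let h : ℝ → ℝ be a Schwartz function, t ≥ 1, and suppose r > t. Then (r−t) r² |h(r)|² ≲ ∫_t^r |h(ρ)|² ρ² dρ + ∫_t^r |t−ρ|² |h'(ρ)|² ρ² dρ. -/
open MeasureTheory intervalIntegral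

/-!
Since `(ρ - t) ρ² h(ρ)²` vanishes at `ρ = t`, the left-hand side is the integral over `[t, r]`
of its derivative `(ρ² + 2(ρ - t)ρ) h² + 2(ρ - t)ρ² h h'`. For `0 ≤ t ≤ ρ` the middle term is at
most `2ρ² h²`, and `2 (ρ h) ((ρ - t) ρ h') ≤ ρ² h² + (ρ - t)² ρ² h'²` by AM-GM, so the derivative
is pointwise bounded by `4 (h² ρ² + (t - ρ)² h'² ρ²)`.
-/

lemma hasDerivAt_sub_mul_sq_mul_sq {h : ℝ → ℝ} {h' t ρ : ℝ} (hh : HasDerivAt h h' ρ) :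
    HasDerivAt (fun x => (x - t) * x ^ 2 * h x ^ 2)
      ((ρ ^ 2 + 2 * (ρ - t) * ρ) * h ρ ^ 2 + 2 * (ρ - t) * ρ ^ 2 * (h ρ * h')) ρ := by
  have hlin : HasDerivAt (fun x : ℝ => x - t) 1 ρ := (hasDerivAt_id ρ).sub_const t
  have hsq : HasDerivAt (fun x : ℝ => x ^ 2) (2 * ρ) ρ := by simpa using hasDerivAt_pow 2 ρ
  exact ((hlin.fun_mul hsq).fun_mul (hh.fun_pow 2)).congr_deriv (by norm_num; ring)

lemma weighted_energy_deriv_le {t ρ : ℝ} (ht : 0 ≤ t) (htρ : t ≤ ρ) (a b : ℝ) :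
    (ρ ^ 2 + 2 * (ρ - t) * ρ) * a ^ 2 + 2 * (ρ - t) * ρ ^ 2 * (a * b)
      ≤ 4 * (a ^ 2 * ρ ^ 2 + (t - ρ) ^ 2 * b ^ 2 * ρ ^ 2) := by
  have hmid : 2 * (ρ - t) * ρ * a ^ 2 ≤ 2 * ρ ^ 2 * a ^ 2 := by
    have : 0 ≤ t * ρ * a ^ 2 := by have := ht.trans htρ; positivity
    nlinarith
  have hamgm : 2 * (ρ - t) * ρ ^ 2 * (a * b) ≤ a ^ 2 * ρ ^ 2 + (t - ρ) ^ 2 * b ^ 2 * ρ ^ 2 := by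
    nlinarith [sq_nonneg (ρ * a - (ρ - t) * ρ * b)]
  nlinarith [sq_nonneg (a * ρ), sq_nonneg ((t - ρ) * b * ρ)]

theorem sub_mul_sq_mul_sq_le_of_contDiff {h : ℝ → ℝ} (hh : ContDiff ℝ 1 h) {t r : ℝ}
    (ht : 0 ≤ t) (htr : t ≤ r) :
    (r - t) * r ^ 2 * h r ^ 2
      ≤ 4 * ((∫ ρ in t..r, h ρ ^ 2 * ρ ^ 2) + ∫ ρ in t..r, (t - ρ) ^ 2 * deriv h ρ ^ 2 * ρ ^ 2) := by
  have hdiff : Differentiable ℝ h := hh.differentiable one_ne_zero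
  have hcont : Continuous h := hh.continuous
  have hcont' : Continuous (deriv h) := hh.continuous_deriv le_rfl
  have hftc : (r - t) * r ^ 2 * h r ^ 2 = ∫ ρ in t..r,
      (ρ ^ 2 + 2 * (ρ - t) * ρ) * h ρ ^ 2 + 2 * (ρ - t) * ρ ^ 2 * (h ρ * deriv h ρ) := by
    rw [integral_eq_sub_of_hasDerivAt
      (fun ρ _ => hasDerivAt_sub_mul_sq_mul_sq (hdiff ρ).hasDerivAt)
      (Continuous.intervalIntegrable (by fun_prop) t r)]
    ring
  have hint₁ : IntervalIntegrable (fun ρ => h ρ ^ 2 * ρ ^ 2) volume t r :=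
    Continuous.intervalIntegrable (by fun_prop) t r
  have hint₂ : IntervalIntegrable (fun ρ => (t - ρ) ^ 2 * deriv h ρ ^ 2 * ρ ^ 2) volume t r :=
    Continuous.intervalIntegrable (by fun_prop) t r
  rw [hftc, ← integral_add hint₁ hint₂, ← intervalIntegral.integral_const_mul]
  exact integral_mono_on htr (Continuous.intervalIntegrable (by fun_prop) t r)
    ((hint₁.add hint₂).const_mul 4)
    fun ρ hρ => weighted_energy_deriv_le ht hρ.1 _ _

/-- **1D weighted Sobolev estimate (exterior region).** For `h ∈ 𝒮(ℝ)`, `t ≥ 1`,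
`r > t`:
`(r−t) r² h(r)² ≲ ∫_t^r h(ρ)² ρ² dρ + ∫_t^r (t−ρ)² h'(ρ)² ρ² dρ`, absolute constant. -/
theorem weighted_sobolev_exterior :
    ∃ C > 0, ∀ (h : SchwartzMap ℝ ℝ) (t r : ℝ), 1 ≤ t → t < r →
      (r - t) * r^2 * (h r)^2
        ≤ C * ((∫ ρ in t..r, (h ρ)^2 * ρ^2)
            + ∫ ρ in t..r, |t - ρ|^2 * (deriv h ρ)^2 * ρ^2) := by
  refine ⟨4, by norm_num, fun h t r ht htr => ?_⟩
  simpa only [sq_abs] using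
    sub_mul_sq_mul_sq_le_of_contDiff (h.smooth 1) (zero_le_one.trans ht) htr.le
end
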